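/- arXiv:2409.01223 — 5 statements merged into one kernel-verified Lean document; each statement's English description precedes it below -/
import Mathlib

section
/- For all c > 0 and 0 < δ < 1 with 1 - exp(-c) ≥ δ, there exists a unique r in the open-closed interval (δ, 1] such that r·(1 - exp(-c/r)) = δ. -/
/-!
The map `r ↦ r * (1 - exp (-c / r))` is strictly increasing on `(0, ∞)`: its derivative is
`1 - (1 + c / r) * exp (-c / r)`, which is positive because `1 + x < exp x` for `x ≠ 0`.
At `r = δ` it is below `δ`, and at `r = 1` it equals `1 - exp (-c) ≥ δ`, so the intermediate
value theorem gives a root in `(δ, 1]` and strict monotonicity makes it unique.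
-/

open Real Set

theorem one_add_mul_exp_neg_lt_one {x : ℝ} (hx : x ≠ 0) : (1 + x) * exp (-x) < 1 := by
  calc (1 + x) * exp (-x) < exp x * exp (-x) := by
        rw [add_comm]
        exact mul_lt_mul_of_pos_right (add_one_lt_exp hx) (exp_pos _)
    _ = 1 := by rw [← exp_add, add_neg_cancel, exp_zero]

theorem hasDerivAt_mul_one_sub_exp_neg_div (c : ℝ) {r : ℝ} (hr : r ≠ 0) :
    HasDerivAt (fun r => r * (1 - exp (-c / r))) (1 - (1 + c / r) * exp (-c / r)) r := by
  have hquot : HasDerivAt (fun r => -c / r) (c / r ^ 2) r := by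
    simpa [div_eq_mul_inv, neg_mul] using (hasDerivAt_inv hr).const_mul (-c)
  refine ((hasDerivAt_id' r).mul ((hasDerivAt_const r 1).sub hquot.exp)).congr_deriv ?_
  simp only [Pi.sub_apply]
  field_simp
  ring

theorem strictMonoOn_mul_one_sub_exp_neg_div {c : ℝ} (hc : c ≠ 0) :
    StrictMonoOn (fun r => r * (1 - exp (-c / r))) (Ioi 0) := by
  have hderiv (r : ℝ) (hr : r ∈ Ioi 0) := hasDerivAt_mul_one_sub_exp_neg_div c (ne_of_gt hr)
  refine strictMonoOn_of_deriv_pos (convex_Ioi 0)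
    (fun r hr => (hderiv r hr).continuousAt.continuousWithinAt) fun r hr => ?_
  rw [interior_Ioi] at hr
  rw [(hderiv r hr).deriv, sub_pos, neg_div]
  exact one_add_mul_exp_neg_lt_one (div_ne_zero hc (ne_of_gt hr))

/-- For all `c > 0` and `0 < δ < 1` with `1 - exp(-c) ≥ δ`, there exists a unique
`r ∈ (δ, 1]` such that `r * (1 - exp(-c/r)) = δ`. -/
theorem exists_unique_root (c δ : ℝ) (hc : 0 < c) (hδ0 : 0 < δ) (hδ1 : δ < 1)
    (h : δ ≤ 1 - Real.exp (-c)) :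
    ∃! r : ℝ, r ∈ Set.Ioc δ 1 ∧ r * (1 - Real.exp (-c / r)) = δ := by
  set f : ℝ → ℝ := fun r => r * (1 - exp (-c / r))
  have hmono : StrictMonoOn f (Ioi 0) := strictMonoOn_mul_one_sub_exp_neg_div hc.ne'
  have hpos : Ioc δ 1 ⊆ Ioi 0 := fun r hr => hδ0.trans hr.1
  have hcont : ContinuousOn f (Icc δ 1) := fun r hr =>
    (hasDerivAt_mul_one_sub_exp_neg_div c (hδ0.trans_le hr.1).ne').continuousAt.continuousWithinAt
  have hfδ : f δ < δ := mul_lt_of_lt_one_right hδ0 (sub_lt_self 1 (exp_pos _))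
  have hf1 : f 1 = 1 - exp (-c) := by simp [f]
  obtain ⟨r, hr, hfr⟩ := intermediate_value_Ioc hδ1.le hcont ⟨hfδ, hf1 ▸ h⟩
  exact ⟨r, ⟨hr, hfr⟩, fun s ⟨hs, hfs⟩ => hmono.injOn (hpos hs) (hpos hr) (hfs.trans hfr.symm)⟩
end

section
/- Let v₁, …, v_J be 0-1 vectors of length n, each with exactly m ones, where J ≥ 2. Then there exist distinct indices i ≠ j such that the inner product v_i · v_j is at least m²/n − m/(J−1). -/
/-- Plotkin-style bound: given `J ≥ 2` subsets of an `n`-element ground set,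
each of size `m`, some two of them intersect in at least `m²/n - m/(J-1)`
elements. -/
theorem plotkin_intersection (n m J : ℕ) (hn : 0 < n) (hJ : 2 ≤ J)
    (A : Fin J → Finset (Fin n)) (hA : ∀ i, (A i).card = m) :
    ∃ i j : Fin J, i ≠ j ∧
      (m : ℝ) ^ 2 / (n : ℝ) - (m : ℝ) / ((J : ℝ) - 1) ≤ ((A i ∩ A j).card : ℝ) := by
  by_contra hcon
  push_neg at hcon
  set c : ℝ := (m : ℝ) ^ 2 / (n : ℝ) - (m : ℝ) / ((J : ℝ) - 1) with hc
  have hn' : (0 : ℝ) < n := by exact_mod_cast hn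
  have hJ' : (2 : ℝ) ≤ (J : ℝ) := by exact_mod_cast hJ
  have hJ1 : (0 : ℝ) < (J : ℝ) - 1 := by linarith
  set f : Fin J → Fin n → ℝ := fun i x => if x ∈ A i then 1 else 0 with hf
  have key : ∀ i j : Fin J, ((A i ∩ A j).card : ℝ) = ∑ x : Fin n, f i x * f j x := by
    intro i j
    have h1 : ∀ x : Fin n, f i x * f j x = if x ∈ A i ∩ A j then (1 : ℝ) else 0 := by
      intro x
      by_cases hx : x ∈ A i <;> by_cases hy : x ∈ A j <;>
        simp [hf, hx, hy, Finset.mem_inter]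
    rw [Finset.sum_congr rfl fun x _ => h1 x, Finset.sum_ite_mem, Finset.univ_inter,
      Finset.sum_const, nsmul_eq_mul, mul_one]
  set T : ℝ := ∑ i : Fin J, ∑ j : Fin J, ((A i ∩ A j).card : ℝ) with hT
  have total : ∑ x : Fin n, (∑ i : Fin J, f i x) ^ 2 = T := by
    rw [hT]
    simp_rw [key, sq, Finset.sum_mul_sum]
    rw [Finset.sum_comm]
    exact Finset.sum_congr rfl fun i _ => Finset.sum_comm
  have sumd : ∑ x : Fin n, ∑ i : Fin J, f i x = (J : ℝ) * m := by
    rw [Finset.sum_comm]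
    simp [hf, Finset.sum_ite_mem, Finset.univ_inter, hA, Finset.card_univ, mul_comm]
  have cs : ((J : ℝ) * m) ^ 2 ≤ (n : ℝ) * T := by
    rw [← sumd, ← total]
    have := sq_sum_le_card_mul_sum_sq (s := (Finset.univ : Finset (Fin n)))
      (f := fun x => ∑ i : Fin J, f i x)
    simpa [Finset.card_univ] using this
  have hb : ∀ i : Fin J, ∑ j : Fin J, ((A i ∩ A j).card : ℝ) < m + ((J : ℝ) - 1) * c := by
    intro i
    rw [← Finset.add_sum_erase _ _ (Finset.mem_univ i)]
    have h1 : ((A i ∩ A i).card : ℝ) = m := by simp [hA]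
    have hne : (Finset.univ.erase i).Nonempty := by
      rw [← Finset.card_pos, Finset.card_erase_of_mem (Finset.mem_univ i), Finset.card_univ,
        Fintype.card_fin]
      omega
    have h2 : ∑ j ∈ Finset.univ.erase i, ((A i ∩ A j).card : ℝ) <
        ∑ j ∈ Finset.univ.erase i, c := by
      refine Finset.sum_lt_sum_of_nonempty hne fun j hj => ?_
      exact hcon i j (Ne.symm (Finset.ne_of_mem_erase hj))
    have h3 : ∑ j ∈ Finset.univ.erase i, c = ((J : ℝ) - 1) * c := by
      rw [Finset.sum_const, Finset.card_erase_of_mem (Finset.mem_univ i), Finset.card_univ,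
        Fintype.card_fin, nsmul_eq_mul, Nat.cast_sub (by omega), Nat.cast_one]
    rw [h1]
    linarith [h2, h3.le, h3.ge]
  have hTb : T < (J : ℝ) * ((m : ℝ) + ((J : ℝ) - 1) * c) := by
    rw [hT]
    calc ∑ i : Fin J, ∑ j : Fin J, ((A i ∩ A j).card : ℝ)
        < ∑ _i : Fin J, ((m : ℝ) + ((J : ℝ) - 1) * c) := by
          refine Finset.sum_lt_sum_of_nonempty ⟨⟨0, by omega⟩, Finset.mem_univ _⟩
            fun i _ => hb i
      _ = (J : ℝ) * ((m : ℝ) + ((J : ℝ) - 1) * c) := by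
          rw [Finset.sum_const, Finset.card_univ, Fintype.card_fin, nsmul_eq_mul]
  have hcval : (n : ℝ) * (((J : ℝ) - 1) * c) = ((J : ℝ) - 1) * (m : ℝ) ^ 2 - (n : ℝ) * m := by
    rw [hc]
    field_simp
  have hmul := mul_lt_mul_of_pos_left hTb hn'
  nlinarith [sq_nonneg ((m : ℝ)), mul_pos hn' hJ1, mul_nonneg (sq_nonneg (m : ℝ)) (le_trans zero_le_two hJ'),
    mul_nonneg (mul_nonneg hn'.le (sq_nonneg (m : ℝ))) (by linarith : (0:ℝ) ≤ (J:ℝ))]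
end

section
/- Fix natural numbers M ≥ 1, an integer K with 1 ≤ K ≤ M, and an inner alphabet partitioned into M groups each of size g ≥ 1 (total n = M·g elements). Call a codeword any set consisting of exactly one element from each group. If J · 2^M · g^{M−K} ≤ g^M, then there exist J codewords A₁, …, A_J such that |A_i ∩ A_j| < K for all i ≠ j. -/
/-!
Greedy construction. A codeword `a` blocks every `b` agreeing with it on at least `K`
coordinates; such a `b` is fixed by a `K`-set of coordinates where it equals `a` together with
its values elsewhere, so `a` blocks at most `(M choose K) · g^(M-K) ≤ 2^M · g^(M-K)` words.
Hence `J - 1` chosen codewords block fewer than `g^M` words, and an unblocked one can be added.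
-/

open Finset

theorem exists_forall_not_rel_of_card_lt {α : Type*} [Fintype α] [DecidableEq α]
    (R : α → α → Prop) [DecidableRel R] {J D : ℕ} (hD : ∀ a, #{b | R a b} ≤ D)
    (A : Fin J → α) (hJ : J * D < Fintype.card α) : ∃ b, ∀ i, ¬R (A i) b := by
  have hblocked :
      #(univ.biUnion fun i => ({b | R (A i) b} : Finset α)) < #(univ : Finset α) :=
    (card_biUnion_le_card_mul _ _ D fun i _ => hD (A i)).trans_lt (by simpa using hJ)
  obtain ⟨b, -, hb⟩ := exists_mem_notMem_of_card_lt_card hblocked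
  exact ⟨b, fun i hi => hb (mem_biUnion.2 ⟨i, mem_univ _, by simpa using hi⟩)⟩

theorem pairwise_not_rel_snoc {α : Type*} (R : α → α → Prop) (hsymm : ∀ a b, R a b → R b a)
    {J : ℕ} {A : Fin J → α} {b : α} (hA : Pairwise fun i j => ¬R (A i) (A j))
    (hb : ∀ i, ¬R (A i) b) :
    Pairwise fun i j =>
      ¬R (Fin.snoc (α := fun _ => α) A b i) (Fin.snoc (α := fun _ => α) A b j) := by
  intro i j hij
  induction i using Fin.lastCases with
  | last =>
    induction j using Fin.lastCases with
    | last => exact absurd rfl hij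
    | cast j => simpa using fun h => hb j (hsymm _ _ h)
  | cast i =>
    induction j using Fin.lastCases with
    | last => simpa using hb i
    | cast j => simpa using hA (ne_of_apply_ne Fin.castSucc hij)

theorem exists_pairwise_not_rel {α : Type*} [Fintype α] [DecidableEq α] [Nonempty α]
    (R : α → α → Prop) [DecidableRel R] (hsymm : ∀ a b, R a b → R b a) {D : ℕ}
    (hD : ∀ a, #{b | R a b} ≤ D) :
    ∀ J, J * D ≤ Fintype.card α → ∃ A : Fin J → α, Pairwise fun i j => ¬R (A i) (A j)
  | 0, _ => ⟨Fin.elim0, fun i => i.elim0⟩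
  | J + 1, hJ => by
    obtain ⟨A, hA⟩ := exists_pairwise_not_rel R hsymm hD J (by nlinarith)
    have hlt : J * D < Fintype.card α := by
      rcases D.eq_zero_or_pos with rfl | hD0
      · simpa using Fintype.card_pos
      · nlinarith
    obtain ⟨b, hb⟩ := exists_forall_not_rel_of_card_lt R hD A hlt
    exact ⟨Fin.snoc A b, pairwise_not_rel_snoc R hsymm hA hb⟩

section Agreement

variable {ι α : Type*} [Fintype ι] [DecidableEq ι] [Fintype α] [DecidableEq α]

theorem card_filter_forall_mem_apply_eq (a : ι → α) (S : Finset ι) :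
    #{b : ι → α | ∀ x ∈ S, b x = a x} = Fintype.card α ^ (Fintype.card ι - #S) := by
  have hpi : ({b : ι → α | ∀ x ∈ S, b x = a x} : Finset _) =
      Fintype.piFinset fun x => if x ∈ S then {a x} else univ := by
    ext b
    simp only [mem_filter, mem_univ, true_and, Fintype.mem_piFinset]
    refine forall_congr' fun x => ?_
    split_ifs <;> simp [*]
  rw [hpi, Fintype.card_piFinset]
  calc ∏ x, #(if x ∈ S then {a x} else univ)
      = ∏ x, if x ∈ S then 1 else Fintype.card α :=
        prod_congr rfl fun x _ => by split_ifs <;> simp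
    _ = Fintype.card α ^ (Fintype.card ι - #S) := by
        rw [prod_ite, prod_const_one, one_mul, prod_const, filter_notMem_eq_sdiff,
          ← compl_eq_univ_sdiff, card_compl]

theorem card_filter_le_card_filter_apply_eq_le (K : ℕ) (a : ι → α) :
    #{b : ι → α | K ≤ #{x | a x = b x}} ≤
      (Fintype.card ι).choose K * Fintype.card α ^ (Fintype.card ι - K) := by
  have hcover : ({b : ι → α | K ≤ #{x | a x = b x}} : Finset _) ⊆
      (univ.powersetCard K).biUnion fun S => {b | ∀ x ∈ S, b x = a x} := by
    intro b hb
    obtain ⟨S, hS, hSK⟩ := exists_subset_card_eq (mem_filter.1 hb).2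
    refine mem_biUnion.2 ⟨S, mem_powersetCard.2 ⟨subset_univ S, hSK⟩, ?_⟩
    simpa using fun x hx => (mem_filter.1 (hS hx)).2.symm
  calc _ ≤ _ := card_le_card hcover
    _ ≤ #(univ.powersetCard K) * Fintype.card α ^ (Fintype.card ι - K) :=
        card_biUnion_le_card_mul _ _ _ fun S hS => by
          rw [card_filter_forall_mem_apply_eq, (mem_powersetCard.1 hS).2]
    _ = _ := by rw [card_powersetCard, card_univ]

end Agreement

theorem greedy_codebook_general (M g K J : ℕ) (hg : 1 ≤ g)
    (hJ : J * 2 ^ M * g ^ (M - K) ≤ g ^ M) :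
    ∃ A : Fin J → (Fin M → Fin g), ∀ i j : Fin J, i ≠ j →
      (Finset.univ.filter (fun x => A i x = A j x)).card < K := by
  have : Nonempty (Fin g) := ⟨⟨0, hg⟩⟩
  have hsymm (a b : Fin M → Fin g) (h : K ≤ #{x | a x = b x}) : K ≤ #{x | b x = a x} := by
    simpa only [eq_comm] using h
  have hblocked (a : Fin M → Fin g) :
      #{b : Fin M → Fin g | K ≤ #{x | a x = b x}} ≤ 2 ^ M * g ^ (M - K) := by
    simpa using (card_filter_le_card_filter_apply_eq_le K a).trans
      (Nat.mul_le_mul_right _ (Nat.choose_le_two_pow _ K))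
  obtain ⟨A, hA⟩ := exists_pairwise_not_rel _ hsymm hblocked J (by simpa [mul_assoc] using hJ)
  exact ⟨A, fun i j hij => not_le.1 (hA hij)⟩

/-- Greedy (Gilbert–Varshamov style) construction: with `M` groups of size `g`
(a codeword picks one element per group, represented as a function
`Fin M → Fin g`), if `J · 2^M · g^(M-K) ≤ g^M` then there exist `J` codewords
any two of which agree on fewer than `K` coordinates (i.e., intersect in fewer
than `K` elements). -/
theorem greedy_codebook (M g K J : ℕ) (hM : 1 ≤ M) (hg : 1 ≤ g)
    (hK1 : 1 ≤ K) (hKM : K ≤ M) (hJ : J * 2 ^ M * g ^ (M - K) ≤ g ^ M) :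
    ∃ A : Fin J → (Fin M → Fin g), ∀ i j : Fin J, i ≠ j →
      (Finset.univ.filter (fun x => A i x = A j x)).card < K :=
  greedy_codebook_general M g K J hg hJ
end

section
/- Let c > 0 and δ ∈ (0, 1) satisfy 1 − exp(−c) ≥ δ, and let r ∈ (δ, 1] be the unique solution of r(1 − exp(−c/r)) = δ. Then the quantity f(c, δ) = −c·log r − H₂(δ) + r·H₂(δ/r) is nonnegative, and equals 0 when δ = 1 − exp(−c), where H₂(x) = x·log(1/x) + (1−x)·log(1/(1−x)) is the binary entropy function (natural log). -/
/-- Binary entropy function with natural logarithm. -/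
noncomputable def binEnt (x : ℝ) : ℝ := x * Real.log (1 / x) + (1 - x) * Real.log (1 / (1 - x))

/-!
The root equation gives `c = r (log r - log (r - δ))`, which makes the exponent a function
`F δ r` of the root alone, with `F δ 1 = 0`. Its derivative
`log x · (δ / (x - δ) - log (x / (x - δ)))` is a nonpositive factor times a nonnegative one
(`log y ≤ y - 1`) on `(δ, 1]`, so `F δ r ≥ F δ 1 = 0`. When `δ = 1 - exp (-c)`, strict convexity
of `exp` gives `r (1 - exp (-c / r)) < 1 - exp (-c)` for every `r < 1`, forcing `r = 1`.
-/
open Real Set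

lemma binEnt_eq_negMulLog_add (x : ℝ) : binEnt x = negMulLog x + negMulLog (1 - x) := by
  simp only [binEnt, one_div, log_inv, negMulLog]
  ring

lemma mul_negMulLog_div (a : ℝ) {r : ℝ} (hr : r ≠ 0) :
    r * negMulLog (a / r) = negMulLog a + a * log r := by
  rcases eq_or_ne a 0 with rfl | ha
  · simp
  · rw [negMulLog, negMulLog, log_div ha hr]
    field_simp
    ring

lemma mul_binEnt_div (a : ℝ) {r : ℝ} (hr : r ≠ 0) :
    r * binEnt (a / r) = negMulLog a + negMulLog (r - a) + r * log r := by
  have hsub : 1 - a / r = (r - a) / r := by field_simp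
  rw [binEnt_eq_negMulLog_add, hsub, mul_add, mul_negMulLog_div a hr, mul_negMulLog_div _ hr]
  ring

lemma eq_mul_log_sub_log_of_mul_one_sub_exp_eq {c δ r : ℝ} (hr : 0 < r) (hδr : δ < r)
    (hroot : r * (1 - exp (-c / r)) = δ) : c = r * (log r - log (r - δ)) := by
  have hexp : exp (-c / r) = (r - δ) / r := by
    rw [eq_div_iff hr.ne']
    linarith
  have hlog := congrArg log hexp
  rw [log_exp, log_div (sub_pos.2 hδr).ne' hr.ne', div_eq_iff hr.ne'] at hlog
  linarith

/-- The exponent `F δ x`, with `c` eliminated through `c = x (log x - log (x - δ))`. -/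
noncomputable def exponentOfRoot (δ x : ℝ) : ℝ :=
  -(x * (log x - log (x - δ))) * log x + negMulLog (x - δ) + x * log x - negMulLog (1 - δ)

lemma exponentOfRoot_one (δ : ℝ) : exponentOfRoot δ 1 = 0 := by
  simp [exponentOfRoot]

lemma hasDerivAt_exponentOfRoot {δ x : ℝ} (hx : x ≠ 0) (hxδ : x ≠ δ) :
    HasDerivAt (exponentOfRoot δ) (log x * (δ / (x - δ) - (log x - log (x - δ)))) x := by
  have hxδ' : x - δ ≠ 0 := sub_ne_zero.2 hxδ
  have hlog : HasDerivAt log x⁻¹ x := hasDerivAt_log hx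
  have hlogsub := (hasDerivAt_log hxδ').comp_sub_const x δ
  have hnml := (hasDerivAt_negMulLog hxδ').comp_sub_const x δ
  have := (((((hasDerivAt_id' x).fun_mul (hlog.fun_sub hlogsub)).fun_neg.fun_mul hlog).fun_add
    hnml).fun_add (hasDerivAt_mul_log hx)).sub_const (negMulLog (1 - δ))
  refine this.congr_deriv ?_
  field_simp
  ring

lemma log_sub_log_le_div_sub {δ x : ℝ} (hδx : δ < x) (hx : 0 < x) :
    log x - log (x - δ) ≤ δ / (x - δ) := by
  have hxδ : 0 < x - δ := sub_pos.2 hδx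
  have := log_le_sub_one_of_pos (div_pos hx hxδ)
  rwa [log_div hx.ne' hxδ.ne', div_sub_one hxδ.ne', sub_sub_cancel] at this

lemma antitoneOn_exponentOfRoot {δ : ℝ} (hδ : 0 < δ) :
    AntitoneOn (exponentOfRoot δ) (Ioc δ 1) := by
  have hderiv : ∀ x ∈ Ioc δ 1, HasDerivAt (exponentOfRoot δ)
      (log x * (δ / (x - δ) - (log x - log (x - δ)))) x := fun x hx ↦
    hasDerivAt_exponentOfRoot (hδ.trans hx.1).ne' hx.1.ne'
  refine antitoneOn_of_hasDerivWithinAt_nonpos (convex_Ioc δ 1)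
    (fun x hx ↦ (hderiv x hx).continuousAt.continuousWithinAt)
    (fun x hx ↦ (hderiv x (interior_subset hx)).hasDerivWithinAt) fun x hx ↦ ?_
  rw [interior_Ioc] at hx
  have hx0 : 0 < x := hδ.trans hx.1
  exact mul_nonpos_of_nonpos_of_nonneg (log_nonpos hx0.le hx.2.le)
    (sub_nonneg.2 (log_sub_log_le_div_sub hx.1 hx0))

lemma mul_one_sub_exp_neg_div_lt {c r : ℝ} (hc : 0 < c) (hr0 : 0 < r) (hr1 : r < 1) :
    r * (1 - exp (-c / r)) < 1 - exp (-c) := by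
  have hne : -c / r ≠ 0 := div_ne_zero (neg_ne_zero.2 hc.ne') hr0.ne'
  have hconv := strictConvexOn_exp.2 (mem_univ (-c / r)) (mem_univ 0) hne hr0 (sub_pos.2 hr1)
    (add_sub_cancel r 1)
  simp only [smul_eq_mul, mul_zero, add_zero, exp_zero, mul_one] at hconv
  rw [mul_div_cancel₀ _ hr0.ne'] at hconv
  linarith

theorem exponent_nonneg_general (c δ r : ℝ) (hc : 0 < c) (hδ0 : 0 < δ) (hr : r ∈ Set.Ioc δ 1)
    (hroot : r * (1 - Real.exp (-c / r)) = δ) :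
    0 ≤ -c * Real.log r - binEnt δ + r * binEnt (δ / r) ∧
    (δ = 1 - Real.exp (-c) → -c * Real.log r - binEnt δ + r * binEnt (δ / r) = 0) := by
  obtain ⟨hδr, hr1⟩ := hr
  have hr0 : 0 < r := hδ0.trans hδr
  have hexponent : -c * log r - binEnt δ + r * binEnt (δ / r) = exponentOfRoot δ r := by
    rw [mul_binEnt_div δ hr0.ne', binEnt_eq_negMulLog_add, exponentOfRoot,
      eq_mul_log_sub_log_of_mul_one_sub_exp_eq hr0 hδr hroot]
    ring
  refine ⟨?_, fun heq ↦ ?_⟩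
  · rw [hexponent, ← exponentOfRoot_one δ]
    exact antitoneOn_exponentOfRoot hδ0 ⟨hδr, hr1⟩ ⟨hδr.trans_le hr1, le_rfl⟩ hr1
  · have hr_eq : r = 1 := hr1.eq_of_not_lt fun hlt ↦
      (mul_one_sub_exp_neg_div_lt hc hr0 hlt).ne (hroot.trans heq)
    rw [hexponent, hr_eq, exponentOfRoot_one]

/-- Nonnegativity of the error exponent `f(c, δ) = -c log r - H₂(δ) + r H₂(δ/r)`,
where `r ∈ (δ, 1]` solves `r (1 - exp(-c/r)) = δ`; moreover `f(c, δ) = 0` when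
`δ = 1 - exp(-c)`. -/
theorem exponent_nonneg (c δ r : ℝ) (hc : 0 < c) (hδ0 : 0 < δ) (hδ1 : δ < 1)
    (h : δ ≤ 1 - Real.exp (-c)) (hr : r ∈ Set.Ioc δ 1)
    (hroot : r * (1 - Real.exp (-c / r)) = δ) :
    0 ≤ -c * Real.log r - binEnt δ + r * binEnt (δ / r) ∧
    (δ = 1 - Real.exp (-c) → -c * Real.log r - binEnt δ + r * binEnt (δ / r) = 0) :=
  exponent_nonneg_general c δ r hc hδ0 hr hroot
end

section
/- Fix integers N ≥ 1, M ≥ 1 and 1 ≤ K ≤ M₀ ≤ M, and let p(N, M, K) be the probability that throwing N balls uniformly at random into M bins yields at most K non-empty bins. Then p(N, M, K) ≤ (C(M, K)/C(M₀, K)) · (M₀/M)^N. -/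
/-- Probability that throwing `N` balls uniformly at random into `M` bins yields
at most `K` non-empty bins. -/
noncomputable def ballsProb (N M K : ℕ) : ℝ :=
  (Fintype.card {f : Fin N → Fin M // (Finset.univ.image f).card ≤ K} : ℝ) / (M : ℝ) ^ N

/-!
Sort the maps `f : Fin N → Fin M` by their image `S`. The maps with image exactly `S` correspond
to the surjections onto a `#S`-element set, so the number of maps with at most `K` occupied bins is
`∑_{i ≤ K} C(M, i) s(N, i)`, with `s(N, i)` the number of surjections `Fin N → Fin i`. Since
`C(M, i) / C(M₀, i) ≤ C(M, K) / C(M₀, K)` for `i ≤ K`, this sum is at most `C(M, K) / C(M₀, K)`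
times the same sum for `M₀` bins, which counts some of the `M₀ ^ N` maps `Fin N → Fin M₀`.
-/

open Finset Function

theorem Nat.choose_mul_choose_le_choose_mul_choose {M M₀ K i : ℕ} (hiK : i ≤ K)
    (hM₀M : M₀ ≤ M) : M.choose i * M₀.choose K ≤ M.choose K * M₀.choose i := by
  refine Nat.le_of_mul_le_mul_right ?_ (Nat.choose_pos hiK)
  calc M.choose i * M₀.choose K * K.choose i
      = M.choose i * M₀.choose i * (M₀ - i).choose (K - i) := by
        rw [mul_assoc, Nat.choose_mul hiK, mul_assoc]
    _ ≤ M.choose i * M₀.choose i * (M - i).choose (K - i) := by gcongr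
    _ = M.choose i * (M - i).choose (K - i) * M₀.choose i := by ring
    _ = M.choose K * M₀.choose i * K.choose i := by rw [← Nat.choose_mul hiK]; ring

def imageEqEquivSurjective {α β : Type*} [Fintype α] [DecidableEq β] (S : Finset β) :
    {f : α → β // univ.image f = S} ≃ {g : α → S // Surjective g} where
  toFun f := ⟨fun a => ⟨f.1 a, (Finset.ext_iff.mp f.2 _).mp (mem_image_of_mem _ (mem_univ a))⟩,
    fun s => by
      obtain ⟨a, -, ha⟩ := mem_image.mp ((Finset.ext_iff.mp f.2 s).mpr s.2)
      exact ⟨a, Subtype.ext ha⟩⟩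
  invFun g := ⟨fun a => g.1 a, by
    ext b
    simp only [mem_image, mem_univ, true_and]
    exact ⟨by rintro ⟨a, rfl⟩; exact (g.1 a).2, fun hb => (g.2 ⟨b, hb⟩).imp fun a ha => by rw [ha]⟩⟩
  left_inv _ := rfl
  right_inv _ := rfl

section OccupiedBins

variable (α : Type*) [Fintype α] [DecidableEq α]

noncomputable def surjCount (n : ℕ) : ℕ :=
  Fintype.card {g : α → Fin n // Surjective g}

variable {α} {β : Type*} [Fintype β] [DecidableEq β]

theorem card_filter_image_eq (S : Finset β) :
    #{f : α → β | univ.image f = S} = surjCount α #S := by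
  rw [← Fintype.card_subtype, surjCount]
  refine Fintype.card_congr ((imageEqEquivSurjective S).trans
    (Equiv.subtypeEquiv (Equiv.arrowCongr (Equiv.refl α) S.equivFin) fun g => ?_))
  exact (Equiv.comp_surjective g S.equivFin).symm

theorem card_filter_card_image_eq (i : ℕ) :
    #{f : α → β | #(univ.image f) = i} = (Fintype.card β).choose i * surjCount α i := by
  rw [card_eq_sum_card_fiberwise (t := powersetCard i univ) (f := fun f => univ.image f)
    fun f hf => mem_powersetCard.mpr ⟨subset_univ _, (mem_filter.mp hf).2⟩]
  calc _ = ∑ S ∈ powersetCard i (univ : Finset β), surjCount α i :=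
        sum_congr rfl fun S hS => ?_
    _ = _ := by rw [sum_const, card_powersetCard, card_univ, smul_eq_mul]
  rw [← (mem_powersetCard.mp hS).2, ← card_filter_image_eq, filter_filter]
  congr 1
  ext f
  simp only [mem_filter, mem_univ, true_and, and_iff_right_iff_imp]
  exact fun h => h ▸ rfl

theorem card_filter_card_image_le (K : ℕ) :
    #{f : α → β | #(univ.image f) ≤ K} =
      ∑ i ∈ range (K + 1), (Fintype.card β).choose i * surjCount α i := by
  rw [card_eq_sum_card_fiberwise (t := range (K + 1)) (f := fun f => #(univ.image f))
    fun f hf => mem_range_succ_iff.mpr (mem_filter.mp hf).2]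
  refine sum_congr rfl fun i hi => ?_
  rw [← card_filter_card_image_eq, filter_filter]
  congr 1
  ext f
  simp only [mem_filter, mem_univ, true_and, and_iff_right_iff_imp]
  exact fun h => h ▸ mem_range_succ_iff.mp hi

theorem card_filter_card_image_le_mul_choose_le {γ : Type*} [Fintype γ] [DecidableEq γ] (K : ℕ)
    (hγβ : Fintype.card γ ≤ Fintype.card β) :
    #{f : α → β | #(univ.image f) ≤ K} * (Fintype.card γ).choose K ≤
      (Fintype.card β).choose K * #{g : α → γ | #(univ.image g) ≤ K} := by
  rw [card_filter_card_image_le, card_filter_card_image_le, sum_mul, mul_sum]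
  refine sum_le_sum fun i hi => ?_
  have hchoose := Nat.choose_mul_choose_le_choose_mul_choose (mem_range_succ_iff.mp hi) hγβ
  calc _ = (Fintype.card β).choose i * (Fintype.card γ).choose K * surjCount α i := by ring
    _ ≤ (Fintype.card β).choose K * (Fintype.card γ).choose i * surjCount α i := by gcongr
    _ = _ := by ring

end OccupiedBins

theorem ballsProb_upper_bound_general (N M M₀ K : ℕ) (hKM₀ : K ≤ M₀) (hM₀M : M₀ ≤ M) :
    ballsProb N M K ≤ ((M.choose K : ℝ) / (M₀.choose K : ℝ)) * ((M₀ : ℝ) / (M : ℝ)) ^ N := by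
  have hcount : Fintype.card {f : Fin N → Fin M // #(univ.image f) ≤ K} * M₀.choose K ≤
      M.choose K * M₀ ^ N := by
    have hcmp := card_filter_card_image_le_mul_choose_le (α := Fin N) (β := Fin M) (γ := Fin M₀) K
      (by simpa using hM₀M)
    simp only [Fintype.card_fin] at hcmp
    rw [Fintype.card_subtype]
    exact hcmp.trans (Nat.mul_le_mul_left _ ((card_filter_le _ _).trans (by simp)))
  have hpos : (0 : ℝ) < M₀.choose K := by exact_mod_cast Nat.choose_pos hKM₀
  rw [ballsProb, div_pow, ← mul_div_assoc]
  gcongr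
  rw [div_mul_eq_mul_div, le_div_iff₀ hpos]
  exact_mod_cast hcount

/-- For `1 ≤ N`, `1 ≤ K ≤ M₀ ≤ M`:
`p(N, M, K) ≤ (C(M,K)/C(M₀,K)) · (M₀/M)^N`. -/
theorem ballsProb_upper_bound (N M M₀ K : ℕ) (hN : 1 ≤ N) (hK : 1 ≤ K)
    (hKM₀ : K ≤ M₀) (hM₀M : M₀ ≤ M) :
    ballsProb N M K ≤ ((M.choose K : ℝ) / (M₀.choose K : ℝ)) * ((M₀ : ℝ) / (M : ℝ)) ^ N :=
  ballsProb_upper_bound_general N M M₀ K hKM₀ hM₀M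
end
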